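/- arXiv:1510.08131 — 2 statements merged into one kernel-verified Lean document; each statement's English description precedes it below -/
import Mathlib

section
/- Let X be a nonempty compact metric space, f : X → X a continuous map, and x ∈ X. If limsup_{i→∞} d(f^i(x), f^{i+1}(x)) > 0, then the ω-limit set of x under f contains at least two distinct points. -/
open Filter Topology

/-- The ω-limit set of `x` under `f`: the set of accumulation points of the
sequence `(f^n(x))`. -/
def omegaSet {X : Type*} [MetricSpace X] (f : X → X) (x : X) : Set X :=
  {p | ∀ ε > 0, ∀ N : ℕ, ∃ n ≥ N, dist (f^[n] x) p < ε}

lemma mem_omegaSet_of_tendsto {X : Type*} [MetricSpace X] (f : X → X) (x p : X)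
    (n : ℕ → ℕ) (hn : Filter.Tendsto n Filter.atTop Filter.atTop)
    (hp : Filter.Tendsto (fun k => f^[n k] x) Filter.atTop (𝓝 p)) :
    p ∈ omegaSet f x := by
  intro ε hε N
  have h1 : ∀ᶠ k in atTop, dist (f^[n k] x) p < ε :=
    (Metric.tendsto_nhds.1 hp) ε hε
  have h2 : ∀ᶠ k in atTop, n k ≥ N := hn.eventually_ge_atTop N
  obtain ⟨k, hk1, hk2⟩ := (h1.and h2).exists
  exact ⟨n k, hk2, hk1⟩

theorem limsup_consecutive_pos_implies_two_points_in_omega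
    {X : Type*} [MetricSpace X] [CompactSpace X] [Nonempty X]
    (f : X → X) (hf : Continuous f) (x : X)
    (h : 0 < Filter.atTop.limsup (fun i : ℕ => dist (f^[i] x) (f^[i + 1] x))) :
    ∃ p ∈ omegaSet f x, ∃ q ∈ omegaSet f x, p ≠ q := by
  set u : ℕ → ℝ := fun i => dist (f^[i] x) (f^[i + 1] x) with hu
  set L := Filter.atTop.limsup u with hL
  have hb : Filter.atTop.IsBoundedUnder (· ≥ ·) u :=
    isBoundedUnder_of ⟨0, fun i => dist_nonneg⟩
  have hcb : Filter.atTop.IsCoboundedUnder (· ≤ ·) u :=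
    Filter.isCoboundedUnder_le_of_le Filter.atTop (x := 0) (fun i => dist_nonneg)
  have hfreq : ∃ᶠ i in atTop, L / 2 < u i :=
    frequently_lt_of_lt_limsup hcb (by linarith)
  obtain ⟨φ, hφ, hφ2⟩ := extraction_of_frequently_atTop hfreq
  obtain ⟨p, -, ψ, hψ, hp⟩ :=
    isCompact_univ.tendsto_subseq (fun n : ℕ => Set.mem_univ (f^[φ n] x))
  obtain ⟨q, -, χ, hχ, hq⟩ :=
    isCompact_univ.tendsto_subseq (fun n : ℕ => Set.mem_univ (f^[φ (ψ n) + 1] x))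
  set m : ℕ → ℕ := fun k => φ (ψ (χ k)) with hm
  have hmt : Tendsto m atTop atTop :=
    (hφ.tendsto_atTop.comp hψ.tendsto_atTop).comp hχ.tendsto_atTop
  have hp' : Tendsto (fun k => f^[m k] x) atTop (𝓝 p) :=
    hp.comp hχ.tendsto_atTop
  have hq' : Tendsto (fun k => f^[m k + 1] x) atTop (𝓝 q) := hq
  have hdist : Tendsto (fun k => dist (f^[m k] x) (f^[m k + 1] x)) atTop (𝓝 (dist p q)) :=
    hp'.dist hq'
  have hle : L / 2 ≤ dist p q :=
    le_of_tendsto_of_tendsto tendsto_const_nhds hdist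
      (Filter.Eventually.of_forall fun k => le_of_lt (hφ2 (ψ (χ k))))
  refine ⟨p, mem_omegaSet_of_tendsto f x p m hmt hp', q,
    mem_omegaSet_of_tendsto f x q (fun k => m k + 1)
      (tendsto_atTop_mono (fun k => Nat.le_succ (m k)) hmt) hq', ?_⟩
  intro hpq
  rw [hpq, dist_self] at hle
  linarith
end

section
/- Let σ be the full one-sided shift on the space Σ = {0,1}^ℕ of binary sequences, σ((x_k)_{k∈ℕ}) = (x_{k+1})_{k∈ℕ}, where Σ carries the metric d(x,y) = 2^{−min{k : x_k ≠ y_k}} for x ≠ y. Then σ has an uncountable uniform invariant DC1-scrambled set: there exist an uncountable set S ⊆ Σ with σ(S) ⊆ S and a number ε > 0 such that for any two distinct x, y ∈ S one has F^{xy}(t) = 1 for all t > 0 and F_{xy}(ε) = 0. -/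
open Filter Topology

noncomputable section
open scoped Classical

/-- The metric `d(x,y) = 2^{-min{k : x_k ≠ y_k}}` on `{0,1}^ℕ` (and `d(x,x) = 0`). -/
def shiftDist (x y : ℕ → Bool) : ℝ :=
  if x = y then 0 else (2 : ℝ)⁻¹ ^ sInf {k : ℕ | x k ≠ y k}

/-- The full one-sided shift on `{0,1}^ℕ`. -/
def shiftMap (x : ℕ → Bool) : ℕ → Bool := fun k => x (k + 1)

/-- `ξ(x,y,n,t)` for the shift. -/
def xiShift (x y : ℕ → Bool) (n : ℕ) (t : ℝ) : ℕ :=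
  Set.ncard {i : ℕ | i < n ∧ shiftDist (shiftMap^[i] x) (shiftMap^[i] y) < t}

/-- The upper distributional function `F^{xy}` for the shift. -/
def FupShift (x y : ℕ → Bool) (t : ℝ) : ℝ :=
  Filter.atTop.limsup (fun n : ℕ => (xiShift x y n t : ℝ) / n)

/-- The lower distributional function `F_{xy}` for the shift. -/
def FloShift (x y : ℕ → Bool) (t : ℝ) : ℝ :=
  Filter.atTop.liminf (fun n : ℕ => (xiShift x y n t : ℝ) / n)

namespace DC1Aux

/-- Block boundaries: `NB 0 = 0`, `NB (j+1) = (j+1) * (NB j + 1)`. -/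
def NB : ℕ → ℕ
  | 0 => 0
  | j + 1 => (j + 1) * (NB j + 1)

lemma NB_lt_succ (j : ℕ) : NB j < NB (j + 1) := by
  show NB j < (j + 1) * (NB j + 1)
  have : NB j + 1 ≤ (j + 1) * (NB j + 1) := Nat.le_mul_of_pos_left _ (Nat.succ_pos j)
  omega

lemma NB_strictMono : StrictMono NB := strictMono_nat_of_lt_succ NB_lt_succ

lemma le_NB (j : ℕ) : j ≤ NB j := by
  induction j with
  | zero => simp [NB]
  | succ j _ =>
    show j + 1 ≤ (j + 1) * (NB j + 1)
    exact Nat.le_mul_of_pos_right _ (Nat.succ_pos _)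

lemma NB_add_lt {C j : ℕ} (h : C ≤ j) : NB j + C < NB (j + 1) := by
  have h1 : NB (j + 1) = (j + 1) * NB j + (j + 1) := by
    show (j + 1) * (NB j + 1) = _; ring
  have h2 : NB j ≤ (j + 1) * NB j := Nat.le_mul_of_pos_left _ (Nat.succ_pos j)
  omega

lemma exists_block (i : ℕ) : ∃ j, i < NB (j + 1) :=
  ⟨i, lt_of_lt_of_le (Nat.lt_succ_self i) (le_NB (i + 1))⟩

/-- Index of the block containing coordinate `i`. -/
def blockOf (i : ℕ) : ℕ := Nat.find (exists_block i)

lemma blockOf_lt (i : ℕ) : i < NB (blockOf i + 1) := Nat.find_spec (exists_block i)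

lemma NB_blockOf_le (i : ℕ) : NB (blockOf i) ≤ i := by
  cases h : blockOf i with
  | zero => simp [NB]
  | succ j =>
    have hmin : ¬ i < NB (j + 1) := Nat.find_min (exists_block i) (show j < blockOf i by omega)
    exact Nat.le_of_not_lt hmin

lemma blockOf_eq {i j : ℕ} (h1 : NB j ≤ i) (h2 : i < NB (j + 1)) : blockOf i = j := by
  have ha := blockOf_lt i
  have hb := NB_blockOf_le i
  rcases lt_trichotomy (blockOf i) j with h | h | h
  · exfalso
    have hmono : NB (blockOf i + 1) ≤ NB j := NB_strictMono.monotone (Nat.succ_le_of_lt h)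
    exact absurd (lt_of_lt_of_le ha (le_trans hmono h1)) (lt_irrefl i)
  · exact h
  · exfalso
    have hmono : NB (j + 1) ≤ NB (blockOf i) := NB_strictMono.monotone (Nat.succ_le_of_lt h)
    exact absurd (lt_of_lt_of_le h2 (le_trans hmono hb)) (lt_irrefl i)

/-- The scrambled family: on block `j`, the content is determined by `a = (unpair j).1`:
`a = 0` gives the zero block, `a = 2c+1` writes `α c` constantly, `a = 2k` (k ≥ 1)
writes the pattern of period `2k`. -/
def xa (α : ℕ → Bool) (i : ℕ) : Bool :=
  if (Nat.unpair (blockOf i)).1 = 0 then false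
  else if (Nat.unpair (blockOf i)).1 % 2 = 1 then α ((Nat.unpair (blockOf i)).1 / 2)
  else decide ((i / ((Nat.unpair (blockOf i)).1 / 2)) % 2 = 1)

lemma xa_eq (α : ℕ → Bool) {i j : ℕ} (h1 : NB j ≤ i) (h2 : i < NB (j + 1)) :
    xa α i = if (Nat.unpair j).1 = 0 then false
      else if (Nat.unpair j).1 % 2 = 1 then α ((Nat.unpair j).1 / 2)
      else decide ((i / ((Nat.unpair j).1 / 2)) % 2 = 1) := by
  rw [xa, blockOf_eq h1 h2]

lemma shift_iter : ∀ (i : ℕ) (x : ℕ → Bool) (k : ℕ), (shiftMap^[i] x) k = x (k + i)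
  | 0, x, k => by simp
  | (i + 1), x, k => by
    rw [Function.iterate_succ_apply, shift_iter i (shiftMap x) k]
    show x (k + i + 1) = x (k + (i + 1))
    congr 1

lemma not_shiftDist_lt_one {x y : ℕ → Bool} (h : x 0 ≠ y 0) : ¬ shiftDist x y < 1 := by
  have hxy : x ≠ y := fun he => h (congrFun he 0)
  rw [shiftDist, if_neg hxy]
  have h0 : sInf {k : ℕ | x k ≠ y k} = 0 := Nat.sInf_eq_zero.2 (Or.inl h)
  rw [h0, pow_zero]
  norm_num

lemma shiftDist_le {x y : ℕ → Bool} {w : ℕ} (h : ∀ k, k < w → x k = y k) :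
    shiftDist x y ≤ (2 : ℝ)⁻¹ ^ w := by
  rw [shiftDist]
  split_ifs with he
  · positivity
  · apply pow_le_pow_of_le_one (by norm_num) (by norm_num)
    have hne : {k : ℕ | x k ≠ y k}.Nonempty := Function.ne_iff.1 he
    refine le_csInf hne ?_
    intro m hm
    by_contra hlt
    push_neg at hlt
    exact hm (h m hlt)

lemma shiftDist_comm (x y : ℕ → Bool) : shiftDist x y = shiftDist y x := by
  rw [shiftDist, shiftDist]
  by_cases h : x = y
  · simp [h]
  · rw [if_neg h, if_neg (Ne.symm h)]
    have hs : {k : ℕ | x k ≠ y k} = {k : ℕ | y k ≠ x k} := by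
      ext k; exact ne_comm
    rw [hs]

lemma xiShift_eq_card (x y : ℕ → Bool) (n : ℕ) (t : ℝ) :
    xiShift x y n t = ((Finset.range n).filter
      (fun i => shiftDist (shiftMap^[i] x) (shiftMap^[i] y) < t)).card := by
  rw [xiShift, ← Set.ncard_coe_finset]
  congr 1
  ext i
  simp [Finset.mem_filter, Finset.mem_range]

lemma xi_le_length (x y : ℕ → Bool) (n : ℕ) (t : ℝ) : xiShift x y n t ≤ n := by
  rw [xiShift_eq_card]
  exact (Finset.card_filter_le _ _).trans (le_of_eq (Finset.card_range n))

lemma xi_upper {x y : ℕ → Bool} {t : ℝ} {a b n : ℕ} (hb : b ≤ n)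
    (h : ∀ i, a ≤ i → i < b → ¬ shiftDist (shiftMap^[i] x) (shiftMap^[i] y) < t) :
    xiShift x y n t ≤ n - (b - a) := by
  rw [xiShift_eq_card]
  have hsub : (Finset.range n).filter
      (fun i => shiftDist (shiftMap^[i] x) (shiftMap^[i] y) < t) ⊆
      Finset.range n \ Finset.Ico a b := by
    intro i hi
    rw [Finset.mem_filter] at hi
    rw [Finset.mem_sdiff]
    refine ⟨hi.1, fun hmem => ?_⟩
    rw [Finset.mem_Ico] at hmem
    exact h i hmem.1 hmem.2 hi.2
  calc ((Finset.range n).filter _).card ≤ (Finset.range n \ Finset.Ico a b).card :=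
        Finset.card_le_card hsub
    _ = n - (b - a) := by
        rw [Finset.card_sdiff_of_subset (by
          intro i hi
          rw [Finset.mem_Ico] at hi
          exact Finset.mem_range.2 (lt_of_lt_of_le hi.2 hb))]
        rw [Finset.card_range, Nat.card_Ico]

lemma xi_lower {x y : ℕ → Bool} {t : ℝ} {a b n : ℕ} (hb : b ≤ n)
    (h : ∀ i, a ≤ i → i < b → shiftDist (shiftMap^[i] x) (shiftMap^[i] y) < t) :
    b - a ≤ xiShift x y n t := by
  rw [xiShift_eq_card]
  calc b - a = (Finset.Ico a b).card := (Nat.card_Ico a b).symm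
    _ ≤ _ := Finset.card_le_card (by
        intro i hi
        rw [Finset.mem_Ico] at hi
        exact Finset.mem_filter.2
          ⟨Finset.mem_range.2 (lt_of_lt_of_le hi.2 hb), h i hi.1 hi.2⟩)

lemma ratio_le (C j : ℕ) : ((NB j : ℝ) + C) / NB (j + 1) ≤ ((C : ℝ) + 1) / (j + 1) := by
  have h1 : (NB (j + 1) : ℝ) = ((j : ℝ) + 1) * ((NB j : ℝ) + 1) := by
    rw [show NB (j + 1) = (j + 1) * (NB j + 1) from rfl]
    push_cast; ring
  have hx : (0 : ℝ) ≤ (NB j : ℝ) := Nat.cast_nonneg _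
  have hc : (0 : ℝ) ≤ (C : ℝ) := Nat.cast_nonneg _
  have ht : (0 : ℝ) ≤ (j : ℝ) := Nat.cast_nonneg _
  rw [h1, div_le_div_iff₀ (by positivity) (by positivity)]
  nlinarith [mul_nonneg hc hx, mul_nonneg (mul_nonneg hc hx) ht, mul_nonneg hc ht,
    mul_nonneg hx ht]

lemma hub_ratio (x y : ℕ → Bool) (t : ℝ) (n : ℕ) : (xiShift x y n t : ℝ) / n ≤ 1 := by
  rcases Nat.eq_zero_or_pos n with h | h
  · simp [h]
  · rw [div_le_one (by exact_mod_cast h)]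
    exact_mod_cast xi_le_length x y n t

lemma hlb_ratio (x y : ℕ → Bool) (t : ℝ) (n : ℕ) : (0 : ℝ) ≤ (xiShift x y n t : ℝ) / n := by
  positivity

/-- Core lemma: if along every block of "type" `aa` the two sequences disagree pointwise
(except within `M` of the right end), then the lower distributional function at `1` is `0`. -/
lemma flo_zero (x y : ℕ → Bool) (M aa : ℕ)
    (H : ∀ j, (Nat.unpair j).1 = aa → ∀ i, NB j ≤ i → i + M < NB (j + 1) → x i ≠ y i) :
    FloShift x y 1 = 0 := by
  have hbdd : IsBoundedUnder (· ≤ ·) atTop (fun n : ℕ => (xiShift x y n 1 : ℝ) / n) :=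
    isBoundedUnder_of ⟨1, hub_ratio x y 1⟩
  have hbdd' : IsBoundedUnder (· ≥ ·) atTop (fun n : ℕ => (xiShift x y n 1 : ℝ) / n) :=
    isBoundedUnder_of ⟨0, hlb_ratio x y 1⟩
  refine le_antisymm ?_
    (le_liminf_of_le hbdd.isCoboundedUnder_ge (Eventually.of_forall (hlb_ratio x y 1)))
  have key : ∀ δ : ℝ, 0 < δ → FloShift x y 1 ≤ δ := by
    intro δ hδ
    refine liminf_le_of_frequently_le ?_ hbdd'
    rw [frequently_atTop]
    intro n₀
    obtain ⟨k, hk⟩ := exists_nat_ge (((M : ℝ) + 1) / δ)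
    set j := Nat.pair aa (max n₀ k) with hjdef
    have hjge : max n₀ k ≤ j := Nat.right_le_pair _ _
    have hNj : NB j < NB (j + 1) := NB_lt_succ j
    refine ⟨NB (j + 1), ?_, ?_⟩
    · calc n₀ ≤ max n₀ k := le_max_left _ _
        _ ≤ j := hjge
        _ ≤ NB j := le_NB j
        _ ≤ NB (j + 1) := le_of_lt hNj
    · have hxi : xiShift x y (NB (j + 1)) 1 ≤ NB j + M := by
        have h1 : xiShift x y (NB (j + 1)) 1 ≤ NB (j + 1) - ((NB (j + 1) - M) - NB j) := by
          apply xi_upper (Nat.sub_le _ _)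
          intro i hi1 hi2
          have hne : x i ≠ y i := by
            refine H j ?_ i hi1 (by omega)
            rw [hjdef, Nat.unpair_pair]
          apply not_shiftDist_lt_one
          rw [shift_iter, shift_iter]
          simpa using hne
        omega
      have hpos : (0 : ℝ) < NB (j + 1) := by
        have : 0 < NB (j + 1) := lt_of_le_of_lt (Nat.zero_le _) hNj
        exact_mod_cast this
      have hxiR : (xiShift x y (NB (j + 1)) 1 : ℝ) ≤ (NB j : ℝ) + M := by exact_mod_cast hxi
      calc (xiShift x y (NB (j + 1)) 1 : ℝ) / NB (j + 1)
          ≤ ((NB j : ℝ) + M) / NB (j + 1) := by gcongr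
        _ ≤ ((M : ℝ) + 1) / (j + 1) := ratio_le M j
        _ ≤ δ := by
            rw [div_le_iff₀ (by positivity)]
            have h2 : (M : ℝ) + 1 ≤ (k : ℝ) * δ := (div_le_iff₀ hδ).1 hk
            have h3 : (k : ℝ) ≤ (j : ℝ) + 1 := by
              have : k ≤ j + 1 := le_trans (le_trans (le_max_right n₀ k) hjge) (Nat.le_succ j)
              exact_mod_cast this
            nlinarith
  have h0 : FloShift x y 1 ≤ 0 := by
    refine le_of_forall_pos_le_add ?_
    intro δ hδ
    rw [zero_add]
    exact key δ hδ
  exact h0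

/-- Core lemma: if every zero block is a block of agreement (except within `M` of the
right end), then the upper distributional function is `1` at every `t > 0`. -/
lemma fup_one (x y : ℕ → Bool) (M : ℕ)
    (H : ∀ j, (Nat.unpair j).1 = 0 → ∀ i, NB j ≤ i → i + M < NB (j + 1) → x i = y i) :
    ∀ t : ℝ, 0 < t → FupShift x y t = 1 := by
  intro t ht
  obtain ⟨w, hw⟩ := exists_pow_lt_of_lt_one ht (by norm_num : (2 : ℝ)⁻¹ < 1)
  set C := M + w with hCdef
  have hbdd : IsBoundedUnder (· ≤ ·) atTop (fun n : ℕ => (xiShift x y n t : ℝ) / n) :=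
    isBoundedUnder_of ⟨1, hub_ratio x y t⟩
  have hbdd' : IsBoundedUnder (· ≥ ·) atTop (fun n : ℕ => (xiShift x y n t : ℝ) / n) :=
    isBoundedUnder_of ⟨0, hlb_ratio x y t⟩
  refine le_antisymm
    (limsup_le_of_le hbdd'.isCoboundedUnder_le (Eventually.of_forall (hub_ratio x y t))) ?_
  refine le_of_forall_pos_le_add ?_
  intro δ hδ
  have key : 1 - δ ≤ FupShift x y t := by
    refine le_limsup_of_frequently_le ?_ hbdd
    rw [frequently_atTop]
    intro n₀
    obtain ⟨k, hk⟩ := exists_nat_ge (((C : ℝ) + 1) / δ)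
    set j := Nat.pair 0 (max (max n₀ k) C) with hjdef
    have hjge : max (max n₀ k) C ≤ j := Nat.right_le_pair _ _
    have hCj : C ≤ j := le_trans (le_max_right _ _) hjge
    have hNC : NB j + C < NB (j + 1) := NB_add_lt hCj
    have hNj : NB j < NB (j + 1) := NB_lt_succ j
    refine ⟨NB (j + 1), ?_, ?_⟩
    · calc n₀ ≤ max (max n₀ k) C := le_trans (le_max_left _ _) (le_max_left _ _)
        _ ≤ j := hjge
        _ ≤ NB j := le_NB j
        _ ≤ NB (j + 1) := le_of_lt hNj
    · have hxi : (NB (j + 1) - C) - NB j ≤ xiShift x y (NB (j + 1)) t := by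
        apply xi_lower (Nat.sub_le _ _)
        intro i hi1 hi2
        have hag : ∀ kk, kk < w → (shiftMap^[i] x) kk = (shiftMap^[i] y) kk := by
          intro kk hkk
          rw [shift_iter, shift_iter]
          refine H j ?_ (kk + i) (le_trans hi1 (Nat.le_add_left _ _)) (by omega)
          rw [hjdef, Nat.unpair_pair]
        calc shiftDist (shiftMap^[i] x) (shiftMap^[i] y) ≤ (2 : ℝ)⁻¹ ^ w := shiftDist_le hag
          _ < t := hw
      have hpos : (0 : ℝ) < NB (j + 1) := by
        have : 0 < NB (j + 1) := lt_of_le_of_lt (Nat.zero_le _) hNj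
        exact_mod_cast this
      have hcast : ((NB (j + 1) - C - NB j : ℕ) : ℝ) = (NB (j + 1) : ℝ) - ((NB j : ℝ) + C) := by
        have hle : NB j + C ≤ NB (j + 1) := le_of_lt hNC
        have : NB (j + 1) - C - NB j = NB (j + 1) - (NB j + C) := by omega
        rw [this, Nat.cast_sub hle]
        push_cast; ring
      have hxiR : (NB (j + 1) : ℝ) - ((NB j : ℝ) + C) ≤ (xiShift x y (NB (j + 1)) t : ℝ) := by
        rw [← hcast]
        exact_mod_cast hxi
      have hratio : ((NB j : ℝ) + C) / NB (j + 1) ≤ δ := by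
        calc ((NB j : ℝ) + C) / NB (j + 1) ≤ ((C : ℝ) + 1) / (j + 1) := ratio_le C j
          _ ≤ δ := by
              rw [div_le_iff₀ (by positivity)]
              have h2 : (C : ℝ) + 1 ≤ (k : ℝ) * δ := (div_le_iff₀ hδ).1 hk
              have h3 : (k : ℝ) ≤ (j : ℝ) + 1 := by
                have : k ≤ j + 1 :=
                  le_trans (le_trans (le_trans (le_max_right n₀ k) (le_max_left _ _)) hjge)
                    (Nat.le_succ j)
                exact_mod_cast this
              nlinarith
      calc 1 - δ ≤ 1 - ((NB j : ℝ) + C) / NB (j + 1) := by linarith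
        _ = ((NB (j + 1) : ℝ) - ((NB j : ℝ) + C)) / NB (j + 1) := by
            field_simp
        _ ≤ (xiShift x y (NB (j + 1)) t : ℝ) / NB (j + 1) := by gcongr
  linarith

lemma FloShift_comm (x y : ℕ → Bool) (t : ℝ) : FloShift x y t = FloShift y x t := by
  have hxi : ∀ n : ℕ, xiShift x y n t = xiShift y x n t := by
    intro n
    rw [xiShift, xiShift]
    congr 1
    ext i
    simp only [Set.mem_setOf_eq]
    rw [shiftDist_comm (shiftMap^[i] x)]
  rw [FloShift, FloShift]
  congr 1
  funext n
  rw [hxi n]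

lemma xa_injective : Function.Injective xa := by
  intro α β h
  funext c
  by_contra hc
  set j := Nat.pair (2 * c + 1) 0 with hjdef
  have hj : (Nat.unpair j).1 = 2 * c + 1 := by rw [hjdef, Nat.unpair_pair]
  have h1 : NB j ≤ NB j := le_refl _
  have h2 : NB j < NB (j + 1) := NB_lt_succ j
  have hα := xa_eq α h1 h2
  have hβ := xa_eq β h1 h2
  rw [hj, if_neg (by omega), if_pos (by omega),
    (by omega : (2 * c + 1) / 2 = c)] at hα hβ
  have heq : xa α (NB j) = xa β (NB j) := by rw [h]
  rw [hα, hβ] at heq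
  exact hc heq

lemma not_countable_pi : ¬ (Set.univ : Set (ℕ → Bool)).Countable := by
  intro h
  have : Countable (ℕ → Bool) := Set.countable_univ_iff.1 h
  obtain ⟨f, hf⟩ := exists_surjective_nat (ℕ → Bool)
  obtain ⟨n, hn⟩ := hf (fun k => ! f k k)
  have h2 := congrFun hn n
  cases hb : f n n <;> rw [hb] at h2 <;> simp at h2

/-- Lower distributional function vanishes at `1` for distinct shifts, via period-`2k` blocks. -/
lemma flo_shift_ne (α β : ℕ → Bool) {nx ny : ℕ} (h : nx < ny) :
    FloShift (shiftMap^[nx] (xa α)) (shiftMap^[ny] (xa β)) 1 = 0 := by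
  set k := ny - nx with hkdef
  have hk : 0 < k := by omega
  apply flo_zero _ _ ny (2 * k)
  intro j hj i hi1 hi2
  rw [shift_iter, shift_iter]
  have e1 : xa α (i + nx) = decide (((i + nx) / k) % 2 = 1) := by
    rw [xa_eq α (j := j) (by omega) (by omega), hj, if_neg (by omega), if_neg (by omega),
      (by omega : 2 * k / 2 = k)]
  have e2 : xa β (i + ny) = decide (((i + ny) / k) % 2 = 1) := by
    rw [xa_eq β (j := j) (by omega) (by omega), hj, if_neg (by omega), if_neg (by omega),
      (by omega : 2 * k / 2 = k)]
  rw [e1, e2]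
  have hstep : (i + ny) / k = (i + nx) / k + 1 := by
    rw [(by omega : i + ny = (i + nx) + k), Nat.add_div_right _ hk]
  rw [hstep]
  simp only [ne_eq, decide_eq_decide]
  omega

/-- Lower distributional function vanishes at `1` for equal shifts of distinct points,
via coding blocks. -/
lemma flo_code (α β : ℕ → Bool) (nx : ℕ) (hab : α ≠ β) :
    FloShift (shiftMap^[nx] (xa α)) (shiftMap^[nx] (xa β)) 1 = 0 := by
  obtain ⟨c, hc⟩ := Function.ne_iff.1 hab
  apply flo_zero _ _ nx (2 * c + 1)
  intro j hj i hi1 hi2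
  rw [shift_iter, shift_iter]
  have e1 : xa α (i + nx) = α c := by
    rw [xa_eq α (j := j) (by omega) (by omega), hj, if_neg (by omega), if_pos (by omega),
      (by omega : (2 * c + 1) / 2 = c)]
  have e2 : xa β (i + nx) = β c := by
    rw [xa_eq β (j := j) (by omega) (by omega), hj, if_neg (by omega), if_pos (by omega),
      (by omega : (2 * c + 1) / 2 = c)]
  rw [e1, e2]
  exact hc

end DC1Aux

theorem shift_has_uncountable_uniform_invariant_DC1_scrambled_set :
    ∃ S : Set (ℕ → Bool), ¬ S.Countable ∧ shiftMap '' S ⊆ S ∧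
      ∃ ε > 0, ∀ x ∈ S, ∀ y ∈ S, x ≠ y →
        (∀ t > 0, FupShift x y t = 1) ∧ FloShift x y ε = 0 := by
  classical
  refine ⟨{y | ∃ α k, y = shiftMap^[k] (DC1Aux.xa α)}, ?_, ?_, 1, one_pos, ?_⟩
  · intro hS
    apply DC1Aux.not_countable_pi
    have hsub : Set.range DC1Aux.xa ⊆ {y | ∃ α k, y = shiftMap^[k] (DC1Aux.xa α)} := by
      rintro _ ⟨α, rfl⟩
      exact ⟨α, 0, rfl⟩
    have h2 := (hS.mono hsub).preimage DC1Aux.xa_injective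
    have h3 : DC1Aux.xa ⁻¹' (Set.range DC1Aux.xa) = Set.univ := by
      ext α; simp
    rwa [h3] at h2
  · rintro _ ⟨_, ⟨α, k, rfl⟩, rfl⟩
    exact ⟨α, k + 1, (Function.iterate_succ_apply' shiftMap k _).symm⟩
  · rintro x ⟨α, nx, rfl⟩ y ⟨β, ny, rfl⟩ hxy
    constructor
    · refine DC1Aux.fup_one _ _ (max nx ny) ?_
      intro j hj i hi1 hi2
      have hx := Nat.le_max_left nx ny
      have hy := Nat.le_max_right nx ny
      rw [DC1Aux.shift_iter, DC1Aux.shift_iter]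
      have e1 : DC1Aux.xa α (i + nx) = false := by
        rw [DC1Aux.xa_eq α (j := j) (by omega) (by omega), if_pos hj]
      have e2 : DC1Aux.xa β (i + ny) = false := by
        rw [DC1Aux.xa_eq β (j := j) (by omega) (by omega), if_pos hj]
      rw [e1, e2]
    · rcases Nat.lt_trichotomy nx ny with hlt | heq | hgt
      · exact DC1Aux.flo_shift_ne α β hlt
      · subst heq
        have hab : α ≠ β := by
          intro hcontra
          exact hxy (by rw [hcontra])
        exact DC1Aux.flo_code α β nx hab
      · rw [DC1Aux.FloShift_comm]
        exact DC1Aux.flo_shift_ne β α hgt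
end
end
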